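/- arXiv:2303.04228 — 2 statements merged into one kernel-verified Lean document; each statement's English description precedes it below -/
import Mathlib

section
/- For any x₀ ∈ M, any unit vector v ∈ T_{x₀}M and any ε > 0, the Ricci curvature satisfies (ε²/(n+2))·Ric_{x₀}(v,v) = ⨏_{B_ε} K(v,w)(‖w‖² − ⟨v,w⟩²) dw, the average over the ball B_ε ⊂ T_{x₀}M with respect to the Euclidean volume measure on T_{x₀}M. -/
open MeasureTheory Metric Filter
open scoped ENNReal RealInnerProductSpace Topology

noncomputable section

/-- The model for the tangent space `T_{x₀}M` of an `n`-dimensional Riemannian manifold. -/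
abbrev Euc (n : ℕ) := EuclideanSpace ℝ (Fin n)

/-- The Ricci curvature `Ric(v,v) = ∑ᵢ ⟨R(v,eᵢ)eᵢ, v⟩` associated to a curvature tensor
`R` on the tangent space, `(eᵢ)` being the standard orthonormal basis. -/
def ricciOf {n : ℕ} (R : Euc n →ₗ[ℝ] Euc n →ₗ[ℝ] Euc n →ₗ[ℝ] Euc n) (v : Euc n) : ℝ :=
  ∑ i : Fin n, ⟪R v (EuclideanSpace.basisFun (Fin n) ℝ i)
      (EuclideanSpace.basisFun (Fin n) ℝ i), v⟫

/-- The sectional curvature `K(v,w) = ⟨R(v,w)w, v⟩ / (‖v‖²‖w‖² − ⟨v,w⟩²)` of the plane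
spanned by `v` and `w`. -/
def sectionalOf {n : ℕ} (R : Euc n →ₗ[ℝ] Euc n →ₗ[ℝ] Euc n →ₗ[ℝ] Euc n) (v w : Euc n) : ℝ :=
  ⟪R v w w, v⟫ / (‖v‖ ^ 2 * ‖w‖ ^ 2 - ⟪v, w⟫ ^ 2)

/-- Change of variables along a linear isometry equivalence, which preserves balls
centered at the origin. -/
lemma stmt8_int_comp {n : ℕ} (ε : ℝ) (f : Euc n ≃ₗᵢ[ℝ] Euc n) (g : Euc n → ℝ) :
    ∫ w in Metric.ball (0 : Euc n) ε, g (f w) ∂volume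
      = ∫ w in Metric.ball (0 : Euc n) ε, g w ∂volume := by
  have hpre : f ⁻¹' (Metric.ball (0 : Euc n) ε) = Metric.ball (0 : Euc n) ε := by
    ext x; simp [mem_ball_zero_iff]
  have h := f.measurePreserving.setIntegral_preimage_emb
    f.toHomeomorph.measurableEmbedding g (Metric.ball (0 : Euc n) ε)
  rwa [hpre] at h

/-- Reflection negating the `i`-th coordinate, as a linear isometry equivalence. -/
def stmt8_refl {n : ℕ} (i : Fin n) : Euc n ≃ₗᵢ[ℝ] Euc n :=
  { toFun := fun x => WithLp.toLp 2 (fun j => if j = i then -x j else x j)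
    invFun := fun x => WithLp.toLp 2 (fun j => if j = i then -x j else x j)
    map_add' := by intro x y; ext j; by_cases h : j = i <;> simp [h, add_comm]
    map_smul' := by intro c x; ext j; by_cases h : j = i <;> simp [h]
    left_inv := by intro x; ext j; by_cases h : j = i <;> simp [h]
    right_inv := by intro x; ext j; by_cases h : j = i <;> simp [h]
    norm_map' := by
      intro x
      simp only [EuclideanSpace.norm_eq]
      congr 1
      refine Finset.sum_congr rfl fun j _ => ?_
      by_cases h : j = i <;> simp [h] }

lemma stmt8_refl_apply {n : ℕ} (i : Fin n) (x : Euc n) (j : Fin n) :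
    stmt8_refl i x j = if j = i then -x j else x j := rfl

/-- Odd moments over the ball vanish. -/
lemma stmt8_offdiag {n : ℕ} (ε : ℝ) (i j : Fin n) (hij : i ≠ j) :
    ∫ w in Metric.ball (0 : Euc n) ε, w i * w j ∂volume = 0 := by
  have := stmt8_int_comp ε (stmt8_refl i) (fun w => w i * w j)
  simp only [stmt8_refl_apply, if_pos rfl, if_neg (show j ≠ i from hij.symm), if_true] at this
  have h2 : ∫ w in Metric.ball (0 : Euc n) ε, -w i * w j ∂volume
      = - ∫ w in Metric.ball (0 : Euc n) ε, w i * w j ∂volume := by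
    rw [← integral_neg]; congr 1; ext w; ring
  rw [h2] at this
  linarith

/-- Diagonal second moments over the ball agree. -/
lemma stmt8_diag_eq {n : ℕ} (ε : ℝ) (i j : Fin n) :
    ∫ w in Metric.ball (0 : Euc n) ε, (w i) ^ 2 ∂volume
      = ∫ w in Metric.ball (0 : Euc n) ε, (w j) ^ 2 ∂volume := by
  have := stmt8_int_comp ε (LinearIsometryEquiv.piLpCongrLeft 2 ℝ ℝ (Equiv.swap i j))
    (fun w => (w i) ^ 2)
  rw [← this]
  congr 1; ext w
  rw [LinearIsometryEquiv.piLpCongrLeft_apply]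
  simp [Equiv.piCongrLeft'_apply, Equiv.symm_swap, Equiv.swap_apply_def]

/-- The integral of `‖w‖²` over the ball of radius `ε`. -/
lemma stmt8_norm_sq_integral {n : ℕ} (hn : 0 < n) {ε : ℝ} (hε : 0 < ε) :
    ∫ w in Metric.ball (0 : Euc n) ε, ‖w‖ ^ 2 ∂volume =
      (n : ℝ) * (volume (Metric.ball (0 : Euc n) 1)).toReal * (ε ^ (n + 2) / (n + 2)) := by
  haveI : Nonempty (Fin n) := Fin.pos_iff_nonempty.mp hn
  have hdim : Module.finrank ℝ (Euc n) = n := finrank_euclideanSpace_fin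
  have h1 : ∫ w in Metric.ball (0 : Euc n) ε, ‖w‖ ^ 2 ∂volume
      = ∫ w : Euc n, (Set.Iio ε).indicator (fun y => y ^ 2) ‖w‖ ∂volume := by
    rw [← integral_indicator measurableSet_ball]
    congr 1; ext w
    by_cases h : w ∈ Metric.ball (0 : Euc n) ε
    · rw [Set.indicator_of_mem h, Set.indicator_of_mem (by simpa [mem_ball_zero_iff] using h)]
    · rw [Set.indicator_of_notMem h,
        Set.indicator_of_notMem (by simpa [mem_ball_zero_iff] using h)]
  rw [h1, integral_fun_norm_addHaar volume (fun y => (Set.Iio ε).indicator (fun y => y ^ 2) y),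
    hdim]
  have h2 : ∫ y in Set.Ioi (0:ℝ), y ^ (n - 1) • (Set.Iio ε).indicator (fun y => y ^ 2) y
      = ∫ y in Set.Ioo (0:ℝ) ε, y ^ (n + 1) := by
    rw [← integral_indicator measurableSet_Ioo, ← integral_indicator measurableSet_Ioi]
    congr 1; ext y
    by_cases hy : 0 < y
    · by_cases hy2 : y < ε
      · simp only [Set.indicator_apply, Set.mem_Ioi, Set.mem_Iio, Set.mem_Ioo, hy, hy2, if_true,
          and_self, smul_eq_mul]
        rw [← pow_add, show n - 1 + 2 = n + 1 by omega]
      · simp [Set.indicator_apply, Set.mem_Ioi, Set.mem_Iio, Set.mem_Ioo, hy, hy2]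
    · simp [Set.indicator_apply, Set.mem_Ioi, Set.mem_Ioo, hy]
  have h3 : ∫ y in Set.Ioo (0:ℝ) ε, y ^ (n + 1) = ε ^ (n + 2) / (n + 2) := by
    rw [← integral_Ioc_eq_integral_Ioo, ← intervalIntegral.integral_of_le hε.le, integral_pow]
    push_cast
    ring_nf
  rw [h2, h3]
  simp only [nsmul_eq_mul, smul_eq_mul, measureReal_def]
  ring

/-- Ricci curvature as average over a ball.  For any unit vector
`v ∈ T_{x₀}M` and any `ε > 0`,
`(ε²/(n+2))·Ric_{x₀}(v,v) = ⨍_{B_ε} K(v,w)(‖w‖² − ⟨v,w⟩²) dw`,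
the average over the ball `B_ε ⊆ T_{x₀}M` with respect to the Euclidean volume measure.
The curvature tensor `R` at `x₀` is a trilinear map with the symmetries of a Riemann
curvature tensor; `Ric` and `K` are the associated Ricci and sectional curvatures. -/
theorem stmt8 {n : ℕ} (R : Euc n →ₗ[ℝ] Euc n →ₗ[ℝ] Euc n →ₗ[ℝ] Euc n)
    (hskew : ∀ a b c : Euc n, R a b c = - R b a c)
    (hpair : ∀ a b c d : Euc n, ⟪R a b c, d⟫ = ⟪R c d a, b⟫)
    (hbianchi : ∀ a b c : Euc n, R a b c + R b c a + R c a b = 0)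
    (v : Euc n) (hv : ‖v‖ = 1) (ε : ℝ) (hε : 0 < ε) :
    ε ^ 2 / ((n : ℝ) + 2) * ricciOf R v =
      ⨍ w in Metric.ball (0 : Euc n) ε,
        sectionalOf R v w * (‖w‖ ^ 2 - ⟪v, w⟫ ^ 2) ∂volume := by
  rcases Nat.eq_zero_or_pos n with hn | hn
  · subst hn
    have hv0 : v = 0 := by ext i; exact i.elim0
    rw [hv0, norm_zero] at hv
    norm_num at hv
  haveI : Nonempty (Fin n) := Fin.pos_iff_nonempty.mp hn
  set e : OrthonormalBasis (Fin n) ℝ (Euc n) := EuclideanSpace.basisFun (Fin n) ℝ with he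
  set A : Fin n → Fin n → ℝ := fun i j => ⟪R v (e i) (e j), v⟫ with hA
  set B := Metric.ball (0 : Euc n) ε with hB
  -- the integrand equals ⟪R v w w, v⟫
  have hRvv : ∀ c : Euc n, R v v c = 0 := by
    intro c
    have h : R v v c + R v v c = 0 := by nth_rewrite 2 [hskew v v c]; simp
    have h2 : (2 : ℝ) • R v v c = 0 := by rw [two_smul]; exact h
    exact (smul_eq_zero.mp h2).resolve_left (by norm_num)
  have hpt : ∀ w : Euc n, sectionalOf R v w * (‖w‖ ^ 2 - ⟪v, w⟫ ^ 2) = ⟪R v w w, v⟫ := by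
    intro w
    rw [sectionalOf, hv, one_pow, one_mul]
    by_cases hD : ‖w‖ ^ 2 - ⟪v, w⟫ ^ 2 = 0
    · have hwv : w = ⟪v, w⟫ • v := by
        have hnn : ‖w - ⟪v, w⟫ • v‖ ^ 2 = ‖w‖ ^ 2 - ⟪v, w⟫ ^ 2 := by
          rw [norm_sub_sq_real, inner_smul_right, norm_smul, real_inner_comm]
          simp [hv]
          ring
        rw [hD] at hnn
        have h0 : w - ⟪v, w⟫ • v = 0 := by
          rwa [pow_eq_zero_iff (by norm_num), norm_eq_zero] at hnn
        rwa [sub_eq_zero] at h0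
      have hz : R v w w = 0 := by
        conv_lhs => rw [hwv]
        simp [LinearMap.map_smul, LinearMap.smul_apply, hRvv]
      rw [hz]
      simp
    · exact div_mul_cancel₀ _ hD
  -- bilinear expansion
  have hexp : ∀ w : Euc n, ⟪R v w w, v⟫ = ∑ i : Fin n, ∑ j : Fin n, w i * w j * A i j := by
    intro w
    have hw : ∑ i : Fin n, w i • (e i : Euc n) = w := by
      have := e.sum_repr w
      simpa [he, EuclideanSpace.basisFun_repr] using this
    conv_lhs => rw [← hw]
    simp only [map_sum, LinearMap.sum_apply, sum_inner]
    rw [Finset.sum_comm]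
    refine Finset.sum_congr rfl fun i _ => Finset.sum_congr rfl fun j _ => ?_
    simp only [LinearMap.map_smul, LinearMap.smul_apply, real_inner_smul_left]
    ring
  -- integrability
  have hIntOn : ∀ {g : Euc n → ℝ}, Continuous g → IntegrableOn g B volume := by
    intro g hg
    exact (hg.continuousOn.integrableOn_compact (isCompact_closedBall 0 ε)).mono_set
      ball_subset_closedBall
  have hci : ∀ i : Fin n, Continuous (fun w : Euc n => w i) := fun i =>
    (EuclideanSpace.proj (𝕜 := ℝ) i).continuous
  -- the integral of the expansion
  have hIij : ∀ i j : Fin n,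
      IntegrableOn (fun w : Euc n => w i * w j * A i j) B volume := fun i j =>
    hIntOn (((hci i).mul (hci j)).mul continuous_const)
  have hint1 : ∫ w in B, ⟪R v w w, v⟫ ∂volume
      = ∑ i : Fin n, ∑ j : Fin n, (∫ w in B, w i * w j ∂volume) * A i j := by
    have : ∫ w in B, ⟪R v w w, v⟫ ∂volume
        = ∫ w in B, ∑ i : Fin n, ∑ j : Fin n, w i * w j * A i j ∂volume := by
      congr 1; ext w; exact hexp w
    rw [this, integral_finset_sum]
    · refine Finset.sum_congr rfl fun i _ => ?_
      rw [integral_finset_sum]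
      · exact Finset.sum_congr rfl fun j _ => integral_mul_const _ _
      · exact fun j _ => hIij i j
    · intro i _
      apply integrable_finset_sum
      exact fun j _ => hIij i j
  -- kill the off-diagonal terms
  have hdiag : ∀ i : Fin n, ∑ j : Fin n, (∫ w in B, w i * w j ∂volume) * A i j
      = (∫ w in B, (w i) ^ 2 ∂volume) * A i i := by
    intro i
    rw [Finset.sum_eq_single i]
    · congr 1
      congr 1; ext w; ring
    · intro j _ hji
      rw [stmt8_offdiag ε i j (fun h => hji h.symm), zero_mul]
    · intro h; exact absurd (Finset.mem_univ i) h
  -- compute the diagonal moment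
  set V : ℝ := (volume (Metric.ball (0 : Euc n) 1)).toReal with hV
  have hS : ∫ w in B, ‖w‖ ^ 2 ∂volume = (n : ℝ) * V * (ε ^ (n + 2) / (n + 2)) :=
    stmt8_norm_sq_integral hn hε
  have hnormsq : ∀ w : Euc n, ‖w‖ ^ 2 = ∑ j : Fin n, (w j) ^ 2 := by
    intro w
    rw [EuclideanSpace.norm_eq, Real.sq_sqrt (Finset.sum_nonneg fun _ _ => sq_nonneg _)]
    exact Finset.sum_congr rfl fun j _ => by rw [Real.norm_eq_abs, sq_abs]
  have hsum : ∑ j : Fin n, ∫ w in B, (w j) ^ 2 ∂volume = ∫ w in B, ‖w‖ ^ 2 ∂volume := by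
    rw [← integral_finset_sum]
    · congr 1; ext w; rw [hnormsq w]
    · exact fun j _ => hIntOn ((hci j).pow 2)
  have hmom : ∀ i : Fin n, ∫ w in B, (w i) ^ 2 ∂volume
      = V * (ε ^ (n + 2) / (n + 2)) := by
    intro i
    have h1 : ∑ j : Fin n, ∫ w in B, (w j) ^ 2 ∂volume
        = (n : ℝ) * ∫ w in B, (w i) ^ 2 ∂volume := by
      rw [Finset.sum_congr rfl fun j _ => (stmt8_diag_eq ε j i : _)]
      simp [Finset.card_univ, mul_comm, hB]
    rw [h1, hS] at hsum
    have hn' : (n : ℝ) ≠ 0 := Nat.cast_ne_zero.mpr hn.ne'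
    have hn2 : ((n : ℝ) + 2) ≠ 0 := by positivity
    have key : (n : ℝ) * ((∫ w in B, (w i) ^ 2 ∂volume) * ((n : ℝ) + 2))
        = (n : ℝ) * (V * ε ^ (n + 2)) := by
      field_simp at hsum
      linear_combination (n : ℝ) * hsum
    have key2 := mul_left_cancel₀ hn' key
    field_simp
    linear_combination key2
  -- volume of the ball of radius ε
  haveI : Nontrivial (Euc n) := by
    refine ⟨0, EuclideanSpace.single ⟨0, hn⟩ 1, fun h => ?_⟩
    have := congrFun (congrArg (fun x : Euc n => (x : Fin n → ℝ)) h) ⟨0, hn⟩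
    simp [EuclideanSpace.single_apply] at this
  have hvol : (volume B).toReal = ε ^ n * V := by
    rw [hB, Measure.addHaar_ball volume (0 : Euc n) hε.le, finrank_euclideanSpace_fin,
      ENNReal.toReal_mul, ENNReal.toReal_ofReal (pow_nonneg hε.le n), hV]
  have hV0 : 0 < V := ENNReal.toReal_pos (measure_ball_pos volume _ one_pos).ne'
    measure_ball_lt_top.ne
  -- assemble
  rw [setAverage_eq]
  have hcongr : ∫ w in B, sectionalOf R v w * (‖w‖ ^ 2 - ⟪v, w⟫ ^ 2) ∂volume
      = ∫ w in B, ⟪R v w w, v⟫ ∂volume := by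
    congr 1; ext w; exact hpt w
  rw [hcongr, hint1, Finset.sum_congr rfl fun i _ => hdiag i]
  have hric : ∑ i : Fin n, (∫ w in B, (w i) ^ 2 ∂volume) * A i i
      = V * (ε ^ (n + 2) / (n + 2)) * ricciOf R v := by
    rw [Finset.sum_congr rfl fun i _ => by rw [hmom i]]
    rw [← Finset.mul_sum]
    rfl
  rw [hric, smul_eq_mul, measureReal_def, hvol]
  have hε' : (0:ℝ) < ε ^ n := pow_pos hε n
  have hn2 : ((n : ℝ) + 2) ≠ 0 := by positivity
  field_simp
  ring
end
end

section
/- For 0 < ε < 1 and δ > 0 sufficiently small, the map T̃ : B̃_ε(x₀) → B̃_ε(y) given by T̃(w) = ∥₁w − ½(ε² − ‖w‖²)(∇V(y) − ∥₁∇V(x₀)) is a well-defined diffeomorphism. -/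
open MeasureTheory Metric Filter
open scoped ENNReal RealInnerProductSpace Topology

noncomputable section

lemma euc_expand {n : ℕ} (x y : Euc n) (s : ℝ) :
    ‖x + s • y‖ ^ 2 = ‖x‖ ^ 2 + 2 * (s * ⟪x, y⟫) + s ^ 2 * ‖y‖ ^ 2 := by
  rw [norm_add_sq_real, real_inner_smul_right, norm_smul, mul_pow, Real.norm_eq_abs, sq_abs]

lemma quad_root_eq {a b c s : ℝ} (ha : 0 ≤ a) (hb : 0 < b) (hs : 0 ≤ s)
    (h : a * s ^ 2 + 2 * b * s = c) :
    c / (b + Real.sqrt (b ^ 2 + a * c)) = s := by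
  have h1 : b ^ 2 + a * c = (a * s + b) ^ 2 := by linear_combination (-a) * h
  have h3 : 0 < a * s + 2 * b := by nlinarith [mul_nonneg ha hs]
  rw [h1, Real.sqrt_sq (by nlinarith [mul_nonneg ha hs]),
    show b + (a * s + b) = a * s + 2 * b by ring,
    show c = s * (a * s + 2 * b) by linear_combination -h]
  exact mul_div_cancel_right₀ s h3.ne'

lemma quad_root_prop {a b c : ℝ} (ha : 0 ≤ a) (hb : 0 < b) (hc : 0 < c) :
    0 < c / (b + Real.sqrt (b ^ 2 + a * c)) ∧
    a * (c / (b + Real.sqrt (b ^ 2 + a * c))) ^ 2 +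
      2 * b * (c / (b + Real.sqrt (b ^ 2 + a * c))) = c := by
  set d := Real.sqrt (b ^ 2 + a * c) with hd
  have harg : 0 < b ^ 2 + a * c := by positivity
  have hd2 : d ^ 2 = b ^ 2 + a * c := Real.sq_sqrt harg.le
  have hd0 : 0 ≤ d := Real.sqrt_nonneg _
  have hbd : 0 < b + d := by linarith
  set t := c / (b + d) with ht2
  have h1 : t * (b + d) = c := div_mul_cancel₀ _ hbd.ne'
  have h3 : (a * t + b - d) * (b + d) = 0 := by linear_combination a * h1 - hd2
  have h4 : a * t + b - d = 0 := by
    rcases mul_eq_zero.mp h3 with h | h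
    · exact h
    · exact absurd h hbd.ne'
  exact ⟨div_pos hc hbd, by linear_combination t * h4 + h1⟩

/-- the inverse's coefficient function -/
def tq {n : ℕ} (q : Euc n) (ε : ℝ) (z : Euc n) : ℝ :=
  (ε ^ 2 - ‖z‖ ^ 2) /
    ((1 + ⟪z, q⟫) + Real.sqrt ((1 + ⟪z, q⟫) ^ 2 + ‖q‖ ^ 2 * (ε ^ 2 - ‖z‖ ^ 2)))

set_option maxHeartbeats 1000000 in
lemma key {n : ℕ} {q : Euc n} {ε : ℝ} (hε : 0 < ε) (hε1 : ε < 1) (hq : ‖q‖ < 1/2) :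
    ContDiffOn ℝ (⊤ : ℕ∞) (fun z => z + tq q ε z • q) (ball (0:Euc n) ε) ∧
    Set.MapsTo (fun w : Euc n => w - ((ε^2 - ‖w‖^2)/2) • q) (ball 0 ε) (ball 0 ε) ∧
    Set.MapsTo (fun z => z + tq q ε z • q) (ball 0 ε) (ball 0 ε) ∧
    (∀ w ∈ ball (0:Euc n) ε,
      (w - ((ε^2 - ‖w‖^2)/2) • q) + tq q ε (w - ((ε^2 - ‖w‖^2)/2) • q) • q = w) ∧
    (∀ z ∈ ball (0:Euc n) ε,
      (z + tq q ε z • q) - ((ε^2 - ‖z + tq q ε z • q‖^2)/2) • q = z) := by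
  have hb12 : ∀ z : Euc n, ‖z‖ < ε → 1/2 < 1 + ⟪z, q⟫ := by
    intro z hz
    have h1 := abs_le.mp (abs_real_inner_le_norm z q)
    have h3 : ‖z‖ * ‖q‖ < 1/2 := by nlinarith [norm_nonneg z, norm_nonneg q]
    linarith [h1.1]
  have hcz : ∀ z : Euc n, ‖z‖ < ε → 0 < ε ^ 2 - ‖z‖ ^ 2 := by
    intro z hz; nlinarith [norm_nonneg z]
  -- backward facts
  have bwd : ∀ z : Euc n, ‖z‖ < ε →
      (0 < tq q ε z ∧ ‖z + tq q ε z • q‖ < ε ∧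
        ε^2 - ‖z + tq q ε z • q‖^2 = 2 * tq q ε z) := by
    intro z hz
    obtain ⟨ht0, hquad⟩ := quad_root_prop (sq_nonneg ‖q‖)
      (lt_trans (by norm_num) (hb12 z hz)) (hcz z hz)
    have hts : tq q ε z = (ε ^ 2 - ‖z‖ ^ 2) /
        ((1 + ⟪z, q⟫) + Real.sqrt ((1 + ⟪z, q⟫) ^ 2 + ‖q‖ ^ 2 * (ε ^ 2 - ‖z‖ ^ 2))) := rfl
    rw [← hts] at hquad ht0
    have hcw : ε^2 - ‖z + tq q ε z • q‖^2 = 2 * tq q ε z := by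
      rw [euc_expand]
      linear_combination -hquad
    refine ⟨ht0, ?_, hcw⟩
    nlinarith [norm_nonneg (z + tq q ε z • q), hε]
  -- forward facts
  have fwd : ∀ w : Euc n, ‖w‖ < ε →
      (‖w - ((ε^2 - ‖w‖^2)/2) • q‖ < ε ∧
        tq q ε (w - ((ε^2 - ‖w‖^2)/2) • q) = (ε^2 - ‖w‖^2)/2) := by
    intro w hw
    obtain ⟨s, hs⟩ : ∃ s : ℝ, s = (ε^2 - ‖w‖^2)/2 := ⟨_, rfl⟩
    rw [← hs]
    have hs0 : 0 < s := hs ▸ half_pos (hcz w hw)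
    have hs1 : s < 1/2 := by rw [hs]; nlinarith [norm_nonneg w]
    obtain ⟨z, hzdef⟩ : ∃ z : Euc n, z = w - s • q := ⟨_, rfl⟩
    rw [← hzdef]
    have hzeq : z = w + (-s) • q := by rw [hzdef, neg_smul, ← sub_eq_add_neg]
    have hz2 : ‖z‖^2 = ‖w‖^2 - 2*(s*⟪w,q⟫) + s^2*‖q‖^2 := by
      rw [hzeq, euc_expand]; ring
    have hinner : ⟪z, q⟫ = ⟪w, q⟫ - s * ‖q‖^2 := by
      rw [hzdef, inner_sub_left, real_inner_smul_left, real_inner_self_eq_norm_sq]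
    have hs' : 2 * s = ε^2 - ‖w‖^2 := by rw [hs]; ring
    have h1 := abs_le.mp (abs_real_inner_le_norm w q)
    have hq2 : ‖q‖^2 < 1/4 := by nlinarith [norm_nonneg q]
    have hwq12 : ‖w‖ * ‖q‖ < 1/2 := by nlinarith [norm_nonneg w, norm_nonneg q]
    have hbzpos : 0 < 1 + ⟪z, q⟫ := by
      rw [hinner]
      nlinarith [mul_nonneg hs0.le (sq_nonneg ‖q‖)]
    have hquad : ‖q‖^2 * s^2 + 2 * (1 + ⟪z,q⟫) * s = ε^2 - ‖z‖^2 := by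
      rw [hinner, hz2]
      linear_combination hs'
    have hzball : ‖z‖ < ε := by
      have hcpos : 0 < ε^2 - ‖z‖^2 := by
        rw [← hquad]
        nlinarith [mul_nonneg (sq_nonneg ‖q‖) (sq_nonneg s)]
      nlinarith [norm_nonneg z, hε]
    have htz : tq q ε z = s :=
      quad_root_eq (sq_nonneg ‖q‖) hbzpos hs0.le hquad
    exact ⟨hzball, htz⟩
  -- smoothness
  have htOn : ContDiffOn ℝ (⊤ : ℕ∞) (tq q ε) (ball (0:Euc n) ε) := by
    have hbC : ContDiff ℝ (⊤ : ℕ∞) (fun z : Euc n => 1 + ⟪z, q⟫) :=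
      contDiff_const.add (contDiff_id.inner ℝ contDiff_const)
    have hcC : ContDiff ℝ (⊤ : ℕ∞) (fun z : Euc n => ε ^ 2 - ‖z‖ ^ 2) :=
      contDiff_const.sub (contDiff_norm_sq ℝ)
    have hargC : ContDiff ℝ (⊤ : ℕ∞)
        (fun z : Euc n => (1 + ⟪z, q⟫) ^ 2 + ‖q‖ ^ 2 * (ε ^ 2 - ‖z‖ ^ 2)) :=
      (hbC.pow 2).add (contDiff_const.mul hcC)
    have hdOn : ContDiffOn ℝ (⊤ : ℕ∞)
        (fun z : Euc n => Real.sqrt ((1 + ⟪z, q⟫) ^ 2 + ‖q‖ ^ 2 * (ε ^ 2 - ‖z‖ ^ 2)))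
        (ball (0:Euc n) ε) := by
      intro z hz
      have hz' := mem_ball_zero_iff.mp hz
      have harg : 0 < (1 + ⟪z, q⟫) ^ 2 + ‖q‖ ^ 2 * (ε ^ 2 - ‖z‖ ^ 2) := by
        nlinarith [hb12 z hz', hcz z hz', mul_nonneg (sq_nonneg ‖q‖) (hcz z hz').le,
          sq_nonneg (1 + ⟪z, q⟫)]
      exact ((Real.contDiffAt_sqrt (n := (⊤ : ℕ∞)) harg.ne').comp z hargC.contDiffAt).contDiffWithinAt
    have : ContDiffOn ℝ (⊤ : ℕ∞) (fun z : Euc n => (ε ^ 2 - ‖z‖ ^ 2) /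
        ((1 + ⟪z, q⟫) + Real.sqrt ((1 + ⟪z, q⟫) ^ 2 + ‖q‖ ^ 2 * (ε ^ 2 - ‖z‖ ^ 2))))
        (ball (0:Euc n) ε) := by
      refine hcC.contDiffOn.div (hbC.contDiffOn.add hdOn) ?_
      intro z hz
      have hz' := mem_ball_zero_iff.mp hz
      have := hb12 z hz'
      have := Real.sqrt_nonneg ((1 + ⟪z, q⟫) ^ 2 + ‖q‖ ^ 2 * (ε ^ 2 - ‖z‖ ^ 2))
      positivity
    exact this
  refine ⟨contDiff_id.contDiffOn.add (htOn.smul contDiffOn_const), ?_, ?_, ?_, ?_⟩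
  · intro w hw
    exact mem_ball_zero_iff.mpr (fwd w (mem_ball_zero_iff.mp hw)).1
  · intro z hz
    exact mem_ball_zero_iff.mpr (bwd z (mem_ball_zero_iff.mp hz)).2.1
  · intro w hw
    rw [(fwd w (mem_ball_zero_iff.mp hw)).2]
    abel
  · intro z hz
    rw [(bwd z (mem_ball_zero_iff.mp hz)).2.2,
      show (2 * tq q ε z)/2 = tq q ε z by ring]
    abel

set_option maxHeartbeats 1000000 in
/-- For `0 < ε < 1` and `δ > 0` sufficiently small, the map
`T̃ : B̃_ε(x₀) → B̃_ε(y)`, `T̃(w) = ∥₁w − ½(ε² − ‖w‖²)(∇V(y) − ∥₁∇V(x₀))`, is a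
well-defined diffeomorphism.  Here `y = exp_{x₀}(δv)` and `∥₁ = par x₀ (δ•v) 1` is
parallel transport along `t ↦ exp_{x₀}(tδv)`; both tangent spaces are identified with
`EuclideanSpace ℝ (Fin n)`, so that both `ε`-balls `B̃_ε(x₀)` and `B̃_ε(y)` are the ball
`B(0,ε)`.  The hypothesis `hCg` records the bound
`‖∥₁⁻¹∇V(y) − ∇V(x₀)‖ = O(δ)`, valid by smoothness of `V` on a compact neighbourhood. -/
theorem stmt14 {n : ℕ} {M : Type} [MetricSpace M]
    (expMap : M → Euc n → M)
    (par : M → Euc n → ℝ → (Euc n ≃ₗᵢ[ℝ] Euc n))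
    (gradV : M → Euc n)
    (x₀ : M) (v : Euc n) (hv : ‖v‖ = 1)
    (Cg : ℝ) (hCg : ∀ δ : ℝ, 0 < δ → δ ≤ 1 →
      ‖(par x₀ (δ • v) 1).symm (gradV (expMap x₀ (δ • v))) - gradV x₀‖ ≤ Cg * δ) :
    ∃ r > (0:ℝ), ∀ ε δ : ℝ, 0 < ε → ε < 1 → 0 < δ → δ < r →
      Set.BijOn
        (fun w : Euc n => (par x₀ (δ • v) 1) w -
          ((ε ^ 2 - ‖w‖ ^ 2) / 2) •
            (gradV (expMap x₀ (δ • v)) - (par x₀ (δ • v) 1) (gradV x₀)))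
        (Metric.ball (0 : Euc n) ε) (Metric.ball (0 : Euc n) ε) ∧
      ContDiffOn ℝ (⊤ : ℕ∞)
        (fun w : Euc n => (par x₀ (δ • v) 1) w -
          ((ε ^ 2 - ‖w‖ ^ 2) / 2) •
            (gradV (expMap x₀ (δ • v)) - (par x₀ (δ • v) 1) (gradV x₀)))
        (Metric.ball (0 : Euc n) ε) ∧
      ∃ S : Euc n → Euc n,
        ContDiffOn ℝ (⊤ : ℕ∞) S (Metric.ball (0 : Euc n) ε) ∧
        (∀ w ∈ Metric.ball (0 : Euc n) ε,
          S ((par x₀ (δ • v) 1) w -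
            ((ε ^ 2 - ‖w‖ ^ 2) / 2) •
              (gradV (expMap x₀ (δ • v)) - (par x₀ (δ • v) 1) (gradV x₀))) = w) ∧
        (∀ w ∈ Metric.ball (0 : Euc n) ε,
          (par x₀ (δ • v) 1) (S w) -
            ((ε ^ 2 - ‖S w‖ ^ 2) / 2) •
              (gradV (expMap x₀ (δ • v)) - (par x₀ (δ • v) 1) (gradV x₀)) = w) := by
  have hCg0 : 0 ≤ Cg := le_trans (norm_nonneg _) (by simpa using hCg 1 one_pos le_rfl)
  refine ⟨1 / (2 * (Cg + 1)), by positivity, ?_⟩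
  intro ε δ hε hε1 hδ hδr
  have hq2 : ‖(par x₀ (δ • v) 1).symm (gradV (expMap x₀ (δ • v))) - gradV x₀‖ < 1/2 := by
    have hδ1 : δ ≤ 1 := by
      have h1 : (1:ℝ) / (2*(Cg+1)) ≤ 1 := by
        rw [div_le_one (by positivity)]; linarith
      linarith
    have h2 := hCg δ hδ hδ1
    have h3 : δ * (2*(Cg+1)) < 1 := (lt_div_iff₀ (by positivity)).mp hδr
    nlinarith
  set P := par x₀ (δ • v) 1 with hP
  set q : Euc n := P.symm (gradV (expMap x₀ (δ • v))) - gradV x₀ with hqdef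
  clear_value P q
  obtain ⟨hSOn, hMapsT, hMapsS, hleft, hright⟩ := key (q := q) hε hε1 hq2
  have hPq : gradV (expMap x₀ (δ • v)) - P (gradV x₀) = P q := by
    rw [hqdef, map_sub, LinearIsometryEquiv.apply_symm_apply]
  have hfun : ∀ w : Euc n,
      P w - ((ε ^ 2 - ‖w‖ ^ 2) / 2) • (gradV (expMap x₀ (δ • v)) - P (gradV x₀))
      = P (w - ((ε ^ 2 - ‖w‖ ^ 2) / 2) • q) := by
    intro w
    rw [hPq, map_sub, _root_.map_smul]
  have hSball : ∀ z : Euc n, z ∈ Metric.ball (0:Euc n) ε →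
      P.symm z ∈ Metric.ball (0:Euc n) ε := by
    intro z hz
    rw [mem_ball_zero_iff, LinearIsometryEquiv.norm_map]
    exact mem_ball_zero_iff.mp hz
  have hTmaps : Set.MapsTo
      (fun w : Euc n => P w - ((ε ^ 2 - ‖w‖ ^ 2) / 2) •
        (gradV (expMap x₀ (δ • v)) - P (gradV x₀)))
      (Metric.ball (0:Euc n) ε) (Metric.ball (0:Euc n) ε) := by
    intro w hw
    have h1 := hMapsT hw
    show P w - ((ε ^ 2 - ‖w‖ ^ 2) / 2) • (gradV (expMap x₀ (δ • v)) - P (gradV x₀))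
      ∈ Metric.ball (0:Euc n) ε
    rw [hfun w, mem_ball_zero_iff, LinearIsometryEquiv.norm_map]
    exact mem_ball_zero_iff.mp h1
  have hSmaps : Set.MapsTo (fun z : Euc n => P.symm z + tq q ε (P.symm z) • q)
      (Metric.ball (0:Euc n) ε) (Metric.ball (0:Euc n) ε) := by
    intro z hz
    exact hMapsS (hSball z hz)
  have hLeftInv : ∀ w ∈ Metric.ball (0:Euc n) ε,
      (fun z : Euc n => P.symm z + tq q ε (P.symm z) • q)
        (P w - ((ε ^ 2 - ‖w‖ ^ 2) / 2) •
          (gradV (expMap x₀ (δ • v)) - P (gradV x₀))) = w := by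
    intro w hw
    show P.symm (P w - ((ε ^ 2 - ‖w‖ ^ 2) / 2) •
        (gradV (expMap x₀ (δ • v)) - P (gradV x₀))) +
      tq q ε (P.symm (P w - ((ε ^ 2 - ‖w‖ ^ 2) / 2) •
        (gradV (expMap x₀ (δ • v)) - P (gradV x₀)))) • q = w
    rw [hfun w, LinearIsometryEquiv.symm_apply_apply]
    exact hleft w hw
  have hRightInv : ∀ z ∈ Metric.ball (0:Euc n) ε,
      P ((fun z : Euc n => P.symm z + tq q ε (P.symm z) • q) z) -
        ((ε ^ 2 - ‖(fun z : Euc n => P.symm z + tq q ε (P.symm z) • q) z‖ ^ 2) / 2) •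
          (gradV (expMap x₀ (δ • v)) - P (gradV x₀)) = z := by
    intro z hz
    have h := hright (P.symm z) (hSball z hz)
    show P (P.symm z + tq q ε (P.symm z) • q) -
      ((ε ^ 2 - ‖P.symm z + tq q ε (P.symm z) • q‖ ^ 2) / 2) •
        (gradV (expMap x₀ (δ • v)) - P (gradV x₀)) = z
    rw [hfun (P.symm z + tq q ε (P.symm z) • q), h,
      LinearIsometryEquiv.apply_symm_apply]
  refine ⟨?_, ?_, fun z : Euc n => P.symm z + tq q ε (P.symm z) • q, ?_, ?_, ?_⟩
  · refine Set.InvOn.bijOn ⟨?_, ?_⟩ hTmaps hSmaps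
    · intro w hw
      exact hLeftInv w hw
    · intro z hz
      exact hRightInv z hz
  · have heq : (fun w : Euc n => P w - ((ε ^ 2 - ‖w‖ ^ 2) / 2) •
        (gradV (expMap x₀ (δ • v)) - P (gradV x₀)))
        = fun w : Euc n => P (w - ((ε ^ 2 - ‖w‖ ^ 2) / 2) • q) := funext hfun
    rw [heq]
    have hG : ContDiff ℝ (⊤ : ℕ∞) (fun w : Euc n => w - ((ε ^ 2 - ‖w‖ ^ 2) / 2) • q) :=
      contDiff_id.sub (((contDiff_const.sub (contDiff_norm_sq ℝ)).div_const 2).smul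
        contDiff_const)
    exact (P.contDiff.comp hG).contDiffOn
  · exact hSOn.comp P.symm.contDiff.contDiffOn hSball
  · exact hLeftInv
  · exact hRightInv
end
end
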